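/- Let (X,d) be a metric space and let f : X → ℝ be Lipschitz and bounded. Then for every x ∈ X the map t ↦ Q_t f(x) is locally semiconcave on (0,∞): for every 0 < a < b there exists a constant C ≥ 0 such that t ↦ Q_t f(x) − C t² is concave on [a,b]. -/

import Mathlib

/-!
For fixed `x` and `y` the map `t ↦ f y + d(x,y)² / (2t)` is semiconcave on `[a, ∞)`, with a
constant proportional to `d(x,y)² / a³`. Since `|f| ≤ M`, points `y` with
`d(x,y)² > 4bM` never come close to the infimum defining `Q_t f(x)` for `t ≤ b`, so on `[a,b]`
the function `Q_t f(x) - C t²` is an infimum of concave functions, hence concave.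
-/

open Filter MeasureTheory Set Topology

/-- Hopf–Lax formula: `Q_t f (x) = inf_y f(y) + d(x,y)²/(2t)` for `t > 0`, `Q_0 f = f`. -/
noncomputable def hopfLax {X : Type*} [MetricSpace X] (f : X → ℝ) (t : ℝ) (x : X) : ℝ :=
  if t = 0 then f x else ⨅ y : X, f y + dist x y ^ 2 / (2 * t)

theorem ConcaveOn.ciInf {E ι : Type*} [AddCommMonoid E] [Module ℝ E] [Nonempty ι]
    {s : Set E} {g : ι → E → ℝ} (hg : ∀ i, ConcaveOn ℝ s (g i))
    (hbdd : ∀ z ∈ s, BddBelow (range fun i => g i z)) :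
    ConcaveOn ℝ s fun z => ⨅ i, g i z := by
  refine ⟨(hg (Classical.arbitrary ι)).1, fun z hz w hw μ ν hμ hν hμν => le_ciInf fun i => ?_⟩
  calc _ ≤ μ • g i z + ν • g i w := by
        gcongr
        exacts [ciInf_le (hbdd z hz) i, ciInf_le (hbdd w hw) i]
    _ ≤ g i (μ • z + ν • w) := (hg i).2 hz hw hμ hν hμν

/-- The second derivative of `r / t - c t²` is `2r / t³ - 2c`, nonpositive for `t ≥ a`. -/
theorem concaveOn_div_sub_mul_sq {a r c : ℝ} (ha : 0 < a) (hr : 0 ≤ r) (hrc : r ≤ c * a ^ 3) :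
    ConcaveOn ℝ (Ici a) fun t => r / t - c * t ^ 2 := by
  refine ⟨convex_Ici a, fun s (hs : a ≤ s) t (ht : a ≤ t) l m hl hm hlm => ?_⟩
  simp only [smul_eq_mul]
  obtain rfl : m = 1 - l := by linarith
  set u := l * s + (1 - l) * t with hu_def
  clear_value u
  have hs0 : 0 < s := ha.trans_le hs
  have ht0 : 0 < t := ha.trans_le ht
  have hu : a ≤ u := by nlinarith
  have hu0 : 0 < u := ha.trans_le hu
  have hinv : l * (r / s) + (1 - l) * (r / t) - r / u =
      r / (s * t * u) * (l * (1 - l) * (s - t) ^ 2) := by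
    field_simp
    rw [hu_def]
    ring
  have hsq : l * s ^ 2 + (1 - l) * t ^ 2 - u ^ 2 = l * (1 - l) * (s - t) ^ 2 := by
    rw [hu_def]; ring
  have hcube : a ^ 3 ≤ s * t * u :=
    calc a ^ 3 = a * a * a := by ring
      _ ≤ s * t * u := by gcongr
  have hc : 0 ≤ c := nonneg_of_mul_nonneg_left (hr.trans hrc) (by positivity)
  have hrstu : r / (s * t * u) ≤ c :=
    div_le_of_le_mul₀ (by positivity) hc (hrc.trans (by gcongr))
  have hvar : 0 ≤ l * (1 - l) * (s - t) ^ 2 := mul_nonneg (mul_nonneg hl hm) (sq_nonneg _)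
  nlinarith [mul_le_mul_of_nonneg_right hrstu hvar]

section HopfLax

variable {X : Type*} [MetricSpace X] {f : X → ℝ} {t : ℝ}

theorem hopfLax_of_pos (f : X → ℝ) (ht : 0 < t) (x : X) :
    hopfLax f t x = ⨅ y : X, f y + dist x y ^ 2 / (2 * t) := by
  rw [hopfLax, if_neg ht.ne']

theorem hopfLax_le (hf : BddBelow (range f)) (ht : 0 < t) (x y : X) :
    hopfLax f t x ≤ f y + dist x y ^ 2 / (2 * t) := by
  obtain ⟨m, hm⟩ := hf
  refine hopfLax_of_pos f ht x ▸ ciInf_le ⟨m, ?_⟩ y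
  rintro _ ⟨z, rfl⟩
  have : 0 ≤ dist x z ^ 2 / (2 * t) := by positivity
  linarith [hm (mem_range_self z)]

theorem le_hopfLax {c : ℝ} (ht : 0 < t) (x : X) (h : ∀ y, c ≤ f y + dist x y ^ 2 / (2 * t)) :
    c ≤ hopfLax f t x :=
  have : Nonempty X := ⟨x⟩
  hopfLax_of_pos f ht x ▸ le_ciInf h

theorem bddBelow_range_add_div_sub_mul_sq {M : ℝ} (hM : ∀ y, |f y| ≤ M) (ht : 0 < t)
    (x : X) (s : Set X) (c : ℝ) :
    BddBelow (range fun y : s => f y + (dist x y ^ 2 / 2 / t - c * t ^ 2)) := by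
  refine ⟨-M - c * t ^ 2, ?_⟩
  rintro _ ⟨y, rfl⟩
  have : 0 ≤ dist x y ^ 2 / 2 / t := by positivity
  linarith [abs_le.1 (hM y)]

/-- Only the points `y` with `d(x,y)² ≤ 4bM` matter for `Q_t f(x)` when `|f| ≤ M` and `t ≤ b`. -/
theorem hopfLax_sub_mul_sq_eq_ciInf {M b : ℝ} (hM : ∀ y, |f y| ≤ M) (ht : 0 < t) (htb : t ≤ b)
    (x : X) (c : ℝ) :
    hopfLax f t x - c * t ^ 2 =
      ⨅ y : {y | dist x y ^ 2 ≤ 4 * b * M}, f y + (dist x y ^ 2 / 2 / t - c * t ^ 2) := by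
  have hf : BddBelow (range f) := ⟨-M, by rintro _ ⟨y, rfl⟩; linarith [abs_le.1 (hM y)]⟩
  have hx : dist x x ^ 2 ≤ 4 * b * M := by
    simpa using mul_nonneg (mul_nonneg zero_le_four (ht.le.trans htb)) ((abs_nonneg _).trans (hM x))
  have hnear := bddBelow_range_add_div_sub_mul_sq hM ht x {y | dist x y ^ 2 ≤ 4 * b * M} c
  have : Nonempty {y | dist x y ^ 2 ≤ 4 * b * M} := ⟨⟨x, hx⟩⟩
  refine le_antisymm (le_ciInf fun y => ?_) ?_
  · linarith [hopfLax_le hf ht x y, div_div (dist x y ^ 2) 2 t]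
  · refine le_sub_iff_add_le.2 (le_hopfLax ht x fun y => ?_)
    by_cases hy : dist x y ^ 2 ≤ 4 * b * M
    · linarith [ciInf_le hnear ⟨y, hy⟩, div_div (dist x y ^ 2) 2 t]
    · have hfar : 2 * M ≤ dist x y ^ 2 / (2 * t) := by
        rw [le_div_iff₀ (by positivity)]; nlinarith [(abs_nonneg _).trans (hM x)]
      have hvalx := ciInf_le hnear ⟨x, hx⟩
      simp only [dist_self, zero_pow two_ne_zero, zero_div, zero_sub] at hvalx
      linarith [abs_le.1 (hM x), abs_le.1 (hM y)]

end HopfLax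

theorem stmt2_general {X : Type*} [MetricSpace X] (f : X → ℝ)
    (hb : ∃ M : ℝ, ∀ x, |f x| ≤ M) (x : X)
    (a b : ℝ) (ha : 0 < a) (hab : a < b) :
    ∃ C : ℝ, 0 ≤ C ∧ ConcaveOn ℝ (Set.Icc a b) (fun t : ℝ => hopfLax f t x - C * t ^ 2) := by
  obtain ⟨M, hM⟩ := hb
  have hM0 : 0 ≤ M := (abs_nonneg _).trans (hM x)
  have hb0 : 0 < b := ha.trans hab
  set C := 2 * b * M / a ^ 3
  have : Nonempty {y | dist x y ^ 2 ≤ 4 * b * M} := ⟨⟨x, by simpa using by positivity⟩⟩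
  have hpiece (y : {y | dist x y ^ 2 ≤ 4 * b * M}) :
      ConcaveOn ℝ (Icc a b) fun t => f y + (dist x y ^ 2 / 2 / t - C * t ^ 2) := by
    refine ((concaveOn_const _ (convex_Ici a)).add
      (concaveOn_div_sub_mul_sq ha (by positivity) ?_)).subset Icc_subset_Ici_self (convex_Icc a b)
    rw [div_mul_cancel₀ _ (by positivity)]
    linarith [show dist x y ^ 2 ≤ 4 * b * M from y.2]
  refine ⟨C, by positivity, (ConcaveOn.ciInf hpiece fun t ht => ?_).congr fun t ht => ?_⟩
  · exact bddBelow_range_add_div_sub_mul_sq hM (ha.trans_le ht.1) x _ C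
  · exact (hopfLax_sub_mul_sq_eq_ciInf hM (ha.trans_le ht.1) ht.2 x C).symm

/-- If `f : X → ℝ` is Lipschitz and bounded then for every `x ∈ X` the map
`t ↦ Q_t f (x)` is locally semiconcave on `(0,∞)`: for every `0 < a < b` there is `C ≥ 0` such
that `t ↦ Q_t f (x) - C t²` is concave on `[a,b]`. -/
theorem stmt2 {X : Type*} [MetricSpace X] (f : X → ℝ) (K : NNReal)
    (hf : LipschitzWith K f) (hb : ∃ M : ℝ, ∀ x, |f x| ≤ M) (x : X)
    (a b : ℝ) (ha : 0 < a) (hab : a < b) :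
    ∃ C : ℝ, 0 ≤ C ∧ ConcaveOn ℝ (Set.Icc a b) (fun t : ℝ => hopfLax f t x - C * t ^ 2) :=
  stmt2_general f hb x a b ha hab
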